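/- Let G be an undirected connected graph on nodes 1,…,N, let f, B, C satisfy the Assumption (OFP), and let xᵢ, kᵢⱼ be a continuously differentiable solution of the adaptively coupled system on [0,∞) with xᵢ(t) ∈ X for all t ≥ 0 and all i. Then the synchronization errors are square integrable: ∫₀^∞ ∑_{i=1}^N |ỹᵢ(t)|² dt < ∞, where ỹᵢ(t) = C·(xᵢ(t) − (1/N)∑_{j=1}^N xⱼ(t)). -/

import Mathlib

/-!
Write `eᵢ = xᵢ - x̄` for the deviations from the mean state and `ỹᵢ = C eᵢ`. The function
`V = ∑ᵢ eᵢ ⬝ P eᵢ + ∑_{i ~ j} (kᵢⱼ - κ)² / (2 γᵢⱼ)` is a Lyapunov function: along solutions,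
the LMI integrated over the segment `[x̄, xᵢ] ⊆ X` bounds the drift part of `V̇` by
`θ ∑ |ỹᵢ|²`, the identity `PB = Cᵀ` turns the coupling part into `-∑ kᵢⱼ |ỹᵢ - ỹⱼ|²`, which
the adaptation law cancels, and what remains is `-κ ∑_{i ~ j} |ỹᵢ - ỹⱼ|²`. On a connected graph,
telescoping along paths of length `< N` gives the Poincaré inequality
`∑ |ỹᵢ|² ≤ N²/2 ∑_{i ~ j} |ỹᵢ - ỹⱼ|²` (in place of `1/λ₂`), so for `κ = (θ + 1) N² / 2` we get
`V̇ ≤ -∑ |ỹᵢ|²`. Since `V ≥ 0`, every `∫₀^T ∑ |ỹᵢ|²` is bounded by `V(0)`.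
-/

open Matrix MeasureTheory Finset

section SymmetricMatrix

variable {R m : Type*} [CommRing R] [Fintype m] {P : Matrix m m R}

theorem Matrix.IsSymm.dotProduct_mulVec_comm (hP : P.IsSymm) (v w : m → R) :
    v ⬝ᵥ P *ᵥ w = w ⬝ᵥ P *ᵥ v := by
  rw [dotProduct_mulVec, ← mulVec_transpose, hP.eq, dotProduct_comm]

theorem Matrix.IsSymm.dotProduct_add_transpose_mul_mulVec_self (hP : P.IsSymm) (A : Matrix m m R)
    (v : m → R) : v ⬝ᵥ (P * A + Aᵀ * P) *ᵥ v = 2 * (v ⬝ᵥ P *ᵥ A *ᵥ v) := by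
  rw [add_mulVec, dotProduct_add, ← mulVec_mulVec, ← mulVec_mulVec, dotProduct_mulVec v Aᵀ,
    vecMul_transpose, hP.dotProduct_mulVec_comm (A *ᵥ v)]
  ring

end SymmetricMatrix

section Calculus

variable {𝕜 : Type*} [NontriviallyNormedField 𝕜] {l m : Type*} [Fintype m]
  {u w : 𝕜 → m → 𝕜} {u' w' : m → 𝕜} {t : 𝕜}

theorem HasDerivAt.dotProduct (hu : HasDerivAt u u' t) (hw : HasDerivAt w w' t) :
    HasDerivAt (fun s => u s ⬝ᵥ w s) (u' ⬝ᵥ w t + u t ⬝ᵥ w') t := by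
  unfold _root_.dotProduct
  rw [← sum_add_distrib]
  exact HasDerivAt.fun_sum fun a _ => (hasDerivAt_pi.1 hu a).mul (hasDerivAt_pi.1 hw a)

theorem HasDerivAt.const_mulVec [Finite l] (M : Matrix l m 𝕜) (hu : HasDerivAt u u' t) :
    HasDerivAt (fun s => M *ᵥ u s) (M *ᵥ u') t :=
  hasDerivAt_pi.2 fun i => by
    simpa [mulVec] using (hasDerivAt_const t (M i)).dotProduct hu

theorem HasDerivAt.dotProduct_mulVec_self {P : Matrix m m 𝕜} (hP : P.IsSymm)
    (hu : HasDerivAt u u' t) :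
    HasDerivAt (fun s => u s ⬝ᵥ P *ᵥ u s) (2 * (u t ⬝ᵥ P *ᵥ u')) t := by
  convert hu.dotProduct (hu.const_mulVec P) using 1
  rw [hP.dotProduct_mulVec_comm u']
  ring

end Calculus

section DotProduct

variable {ι m : Type*} [Fintype m]

theorem dotProduct_self_nonneg (v : m → ℝ) : 0 ≤ v ⬝ᵥ v := by
  simpa using dotProduct_star_self_nonneg v

theorem dotProduct_sum_self_le_card_mul (s : Finset ι) (d : ι → m → ℝ) :
    (∑ i ∈ s, d i) ⬝ᵥ (∑ i ∈ s, d i) ≤ #s * ∑ i ∈ s, d i ⬝ᵥ d i := by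
  simp only [dotProduct, Finset.sum_apply, ← sq]
  rw [sum_comm (s := s), mul_sum]
  exact sum_le_sum fun c _ => sq_sum_le_card_mul_sum_sq

theorem sum_sum_dotProduct_sub_self [Fintype ι] (v : ι → m → ℝ) :
    ∑ i, ∑ j, (v i - v j) ⬝ᵥ (v i - v j) =
      2 * Fintype.card ι * ∑ i, v i ⬝ᵥ v i - 2 * ((∑ i, v i) ⬝ᵥ ∑ i, v i) := by
  simp only [sub_dotProduct, dotProduct_sub, sum_sub_distrib, sum_dotProduct, dotProduct_sum,
    sum_const, card_univ, nsmul_eq_mul]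
  rw [sum_comm (f := fun i j => v j ⬝ᵥ v i)]
  simp only [← mul_sum]
  ring

theorem two_mul_sum_sub_dotProduct_sum_smul_sub [Fintype ι] {K : ι → ι → ℝ}
    (hK : ∀ i j, K i j = K j i) (y : ι → m → ℝ) (c : m → ℝ) :
    2 * ∑ i, (y i - c) ⬝ᵥ ∑ j, K i j • (y j - y i) =
      -∑ i, ∑ j, K i j * ((y i - y j) ⬝ᵥ (y i - y j)) := by
  simp only [dotProduct_sum, dotProduct_smul, smul_eq_mul]
  have hswap : ∑ i, ∑ j, K i j * ((y i - c) ⬝ᵥ (y j - y i)) =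
      ∑ i, ∑ j, K i j * ((y j - c) ⬝ᵥ (y i - y j)) := by
    rw [sum_comm]
    simp only [hK]
  rw [two_mul]
  nth_rewrite 2 [hswap]
  rw [← sum_add_distrib, ← sum_neg_distrib]
  refine sum_congr rfl fun i _ => ?_
  rw [← sum_add_distrib, ← sum_neg_distrib]
  refine sum_congr rfl fun j _ => ?_
  simp only [sub_dotProduct, dotProduct_sub, dotProduct_comm (y j) (y i), dotProduct_comm c]
  ring

end DotProduct

namespace SimpleGraph

variable {V m : Type*} [Fintype m]

theorem Walk.dotProduct_sub_self_le {G : SimpleGraph V} (v : V → m → ℝ) {a b : V} (w : G.Walk a b) :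
    (v a - v b) ⬝ᵥ (v a - v b) ≤ w.length * ∑ k ∈ range w.length,
      (v (w.getVert k) - v (w.getVert (k + 1))) ⬝ᵥ (v (w.getVert k) - v (w.getVert (k + 1))) := by
  have htelescope :
      v a - v b = ∑ k ∈ range w.length, (v (w.getVert k) - v (w.getVert (k + 1))) := by
    rw [sum_range_sub' (fun k => v (w.getVert k)), w.getVert_zero, w.getVert_length]
  rw [htelescope]
  simpa using dotProduct_sum_self_le_card_mul (range w.length)
    fun k => v (w.getVert k) - v (w.getVert (k + 1))

variable [Fintype V] (G : SimpleGraph V) [DecidableRel G.Adj]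

/-- Each edge is counted once in each orientation. -/
def dirichletEnergy (v : V → m → ℝ) : ℝ :=
  ∑ x, ∑ y, if G.Adj x y then (v x - v y) ⬝ᵥ (v x - v y) else 0

variable {G}

theorem dirichletEnergy_nonneg (v : V → m → ℝ) : 0 ≤ G.dirichletEnergy v :=
  sum_nonneg fun _ _ => sum_nonneg fun _ _ => by
    split_ifs
    exacts [dotProduct_self_nonneg _, le_rfl]

theorem Walk.IsPath.sum_dotProduct_sub_le_dirichletEnergy {a b : V} {w : G.Walk a b}
    (hw : w.IsPath) (v : V → m → ℝ) :
    ∑ k ∈ range w.length,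
      (v (w.getVert k) - v (w.getVert (k + 1))) ⬝ᵥ (v (w.getVert k) - v (w.getVert (k + 1))) ≤
      G.dirichletEnergy v := by
  classical
  set F : V × V → ℝ := fun p => if G.Adj p.1 p.2 then (v p.1 - v p.2) ⬝ᵥ (v p.1 - v p.2) else 0
  have hinj : Set.InjOn (fun k => (w.getVert k, w.getVert (k + 1))) (range w.length) :=
    fun k hk l hl h => hw.getVert_injOn (by simp at hk ⊢; omega) (by simp at hl ⊢; omega)
      (congrArg Prod.fst h)
  calc _ = ∑ k ∈ range w.length, F (w.getVert k, w.getVert (k + 1)) :=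
        sum_congr rfl fun k hk => by simp [F, w.adj_getVert_succ (mem_range.1 hk)]
    _ = ∑ p ∈ (range w.length).image fun k => (w.getVert k, w.getVert (k + 1)), F p :=
        (sum_image hinj).symm
    _ ≤ ∑ p, F p := sum_le_univ_sum_of_nonneg fun p => by
        simp only [F]; split_ifs
        exacts [dotProduct_self_nonneg _, le_rfl]
    _ = G.dirichletEnergy v := Fintype.sum_prod_type F

theorem Connected.sum_dotProduct_self_le (hG : G.Connected) {v : V → m → ℝ} (hv : ∑ x, v x = 0) :
    ∑ x, v x ⬝ᵥ v x ≤ (Fintype.card V : ℝ) ^ 2 / 2 * G.dirichletEnergy v := by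
  classical
  set n : ℝ := (Fintype.card V : ℝ) with hn_def
  have hn : 0 < n := Nat.cast_pos.2 (Fintype.card_pos_iff.2 hG.nonempty)
  have hpair (x y : V) : (v x - v y) ⬝ᵥ (v x - v y) ≤ n * G.dirichletEnergy v := by
    obtain ⟨w⟩ := hG.preconnected x y
    have hp := w.bypass_isPath
    calc _ ≤ _ := w.bypass.dotProduct_sub_self_le v
      _ ≤ n * G.dirichletEnergy v := by
        gcongr
        · exact sum_nonneg fun _ _ => dotProduct_self_nonneg _
        · rw [hn_def]; exact_mod_cast hp.length_lt.le
        · exact hp.sum_dotProduct_sub_le_dirichletEnergy v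
  have hsum := sum_sum_dotProduct_sub_self v
  rw [hv, zero_dotProduct, mul_zero, sub_zero] at hsum
  have hbound : ∑ x, ∑ y, (v x - v y) ⬝ᵥ (v x - v y) ≤ n ^ 2 * (n * G.dirichletEnergy v) := by
    calc _ ≤ ∑ x : V, ∑ y : V, n * G.dirichletEnergy v :=
          sum_le_sum fun x _ => sum_le_sum fun y _ => hpair x y
      _ = _ := by simp [n]; ring
  rw [hsum] at hbound
  rw [div_mul_eq_mul_div, le_div_iff₀ two_pos]
  nlinarith

end SimpleGraph

section OutputFeedbackPassivity

variable {n p : Type*} [Fintype n] [Fintype p] {f : (n → ℝ) → n → ℝ} {J : (n → ℝ) → Matrix n n ℝ}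
  {C : Matrix p n ℝ} {X : Set (n → ℝ)} {θ : ℝ} {P : Matrix n n ℝ}

theorem Convex.two_mul_dotProduct_mulVec_sub_le (hX : Convex ℝ X)
    (hf : ∀ z ∈ X, HasFDerivAt f (J z).mulVecLin.toContinuousLinearMap z) (hP : P.IsSymm)
    (hLMI : ∀ z ∈ X, ∀ v, v ⬝ᵥ (P * J z + (J z)ᵀ * P) *ᵥ v ≤ θ * (C *ᵥ v ⬝ᵥ C *ᵥ v))
    {a b : n → ℝ} (ha : a ∈ X) (hb : b ∈ X) :
    2 * ((b - a) ⬝ᵥ P *ᵥ (f b - f a)) ≤ θ * (C *ᵥ (b - a) ⬝ᵥ C *ᵥ (b - a)) := by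
  set e := b - a
  have hseg : ∀ s ∈ Set.Icc (0 : ℝ) 1, a + s • e ∈ X := fun s hs => hX.add_smul_sub_mem ha hb hs
  have hg (s) (hs : s ∈ Set.Icc (0 : ℝ) 1) : HasDerivAt (fun s : ℝ => 2 * (e ⬝ᵥ P *ᵥ f (a + s • e)))
      (2 * (e ⬝ᵥ P *ᵥ J (a + s • e) *ᵥ e)) s := by
    have hline : HasDerivAt (fun s : ℝ => a + s • e) e s := by
      simpa using ((hasDerivAt_id s).smul_const e).const_add a
    have hcomp := (hf _ (hseg s hs)).comp_hasDerivAt s hline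
    exact (((hasDerivAt_const s e).dotProduct (hcomp.const_mulVec P))).const_mul 2 |>.congr_deriv
      (by simp)
  have hmvt := (convex_Icc (0 : ℝ) 1).image_sub_le_mul_sub_of_deriv_le
    (fun s hs => (hg s hs).continuousAt.continuousWithinAt)
    (fun s hs => (hg s (interior_subset hs)).differentiableAt.differentiableWithinAt)
    (C := θ * (C *ᵥ e ⬝ᵥ C *ᵥ e)) (fun s hs => by
      rw [(hg s (interior_subset hs)).deriv, ← hP.dotProduct_add_transpose_mul_mulVec_self]
      exact hLMI _ (hseg s (interior_subset hs)) e)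
    0 (by simp) 1 (by simp) zero_le_one
  simpa [e, mulVec_sub, dotProduct_sub, mul_sub] using hmvt

end OutputFeedbackPassivity

section Network

variable {N : ℕ} {n p : Type*} [Fintype n] [Fintype p]

theorem sum_sub_inv_smul_sum {E : Type*} [AddCommGroup E] [Module ℝ E] (x : Fin N → E) :
    ∑ i, (x i - (N : ℝ)⁻¹ • ∑ j, x j) = 0 := by
  rcases Nat.eq_zero_or_pos N with rfl | hN
  · simp
  · rw [sum_sub_distrib, sum_const, card_univ, Fintype.card_fin, ← Nat.cast_smul_eq_nsmul ℝ,
      smul_smul, mul_inv_cancel₀ (by positivity), one_smul, sub_self]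

theorem HasDerivAt.sum_sub_inv_smul_sum_dotProduct_mulVec {P : Matrix n n ℝ} (hP : P.IsSymm)
    {x : Fin N → ℝ → n → ℝ} {x' : Fin N → n → ℝ} {t : ℝ} (hx : ∀ i, HasDerivAt (x i) (x' i) t) :
    HasDerivAt
      (fun s => ∑ i, (x i s - (N : ℝ)⁻¹ • ∑ j, x j s) ⬝ᵥ P *ᵥ (x i s - (N : ℝ)⁻¹ • ∑ j, x j s))
      (2 * ∑ i, (x i t - (N : ℝ)⁻¹ • ∑ j, x j t) ⬝ᵥ P *ᵥ x' i) t := by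
  have hdev (i) : HasDerivAt (fun s => x i s - (N : ℝ)⁻¹ • ∑ j, x j s)
      (x' i - (N : ℝ)⁻¹ • ∑ j, x' j) t :=
    (hx i).sub ((HasDerivAt.fun_sum fun j _ => hx j).fun_const_smul _)
  refine (HasDerivAt.fun_sum fun i _ => (hdev i).dotProduct_mulVec_self hP).congr_deriv ?_
  -- the derivative of the mean is a constant, which the centred states annihilate
  have hcentred : ∑ i, (x i t - (N : ℝ)⁻¹ • ∑ j, x j t) ⬝ᵥ P *ᵥ ((N : ℝ)⁻¹ • ∑ j, x' j) = 0 := by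
    rw [← sum_dotProduct, sum_sub_inv_smul_sum, zero_dotProduct]
  simp only [mulVec_sub, dotProduct_sub, ← mul_sum]
  rw [sum_sub_distrib, hcentred, sub_zero]

variable {f : (n → ℝ) → n → ℝ} {J : (n → ℝ) → Matrix n n ℝ} {B : Matrix n p ℝ}
  {C : Matrix p n ℝ} {X : Set (n → ℝ)} {θ : ℝ} {P : Matrix n n ℝ}

theorem two_mul_sum_sub_inv_smul_sum_dotProduct_mulVec_le (hN : 0 < N) (hX : Convex ℝ X)
    (hf : ∀ z ∈ X, HasFDerivAt f (J z).mulVecLin.toContinuousLinearMap z) (hP : P.IsSymm)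
    (hLMI : ∀ z ∈ X, ∀ v, v ⬝ᵥ (P * J z + (J z)ᵀ * P) *ᵥ v ≤ θ * (C *ᵥ v ⬝ᵥ C *ᵥ v))
    {x : Fin N → n → ℝ} (hx : ∀ i, x i ∈ X) :
    2 * ∑ i, (x i - (N : ℝ)⁻¹ • ∑ j, x j) ⬝ᵥ P *ᵥ f (x i) ≤
      θ * ∑ i, C *ᵥ (x i - (N : ℝ)⁻¹ • ∑ j, x j) ⬝ᵥ C *ᵥ (x i - (N : ℝ)⁻¹ • ∑ j, x j) := by
  set xbar := (N : ℝ)⁻¹ • ∑ j, x j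
  have hxbar : xbar ∈ X := by
    rw [show xbar = ∑ j, (N : ℝ)⁻¹ • x j from smul_sum ..]
    refine hX.sum_mem (fun _ _ => by positivity) ?_ fun j _ => hx j
    simp [mul_inv_cancel₀ (Nat.cast_pos.2 hN : (0 : ℝ) < N).ne']
  have hcentred : ∑ i, (x i - xbar) ⬝ᵥ P *ᵥ f xbar = 0 := by
    rw [← sum_dotProduct, sum_sub_inv_smul_sum, zero_dotProduct]
  calc 2 * ∑ i, (x i - xbar) ⬝ᵥ P *ᵥ f (x i)
      = ∑ i, 2 * ((x i - xbar) ⬝ᵥ P *ᵥ (f (x i) - f xbar)) := by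
        simp only [mulVec_sub, dotProduct_sub, mul_sub, sum_sub_distrib, ← mul_sum, hcentred,
          mul_zero, sub_zero]
    _ ≤ ∑ i, θ * (C *ᵥ (x i - xbar) ⬝ᵥ C *ᵥ (x i - xbar)) :=
        sum_le_sum fun i _ => hX.two_mul_dotProduct_mulVec_sub_le hf hP hLMI hxbar (hx i)
    _ = _ := (mul_sum ..).symm

theorem two_mul_sum_sub_dotProduct_mulVec_coupling (hPB : P * B = Cᵀ) {K : Fin N → Fin N → ℝ}
    (hK : ∀ i j, K i j = K j i) (x : Fin N → n → ℝ) (c : n → ℝ) :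
    2 * ∑ i, (x i - c) ⬝ᵥ P *ᵥ B *ᵥ ∑ j, K i j • (C *ᵥ x j - C *ᵥ x i) =
      -∑ i, ∑ j, K i j * ((C *ᵥ x i - C *ᵥ x j) ⬝ᵥ (C *ᵥ x i - C *ᵥ x j)) := by
  simp only [mulVec_mulVec, hPB, dotProduct_mulVec _ Cᵀ, vecMul_transpose, mulVec_sub]
  exact two_mul_sum_sub_dotProduct_sum_smul_sub hK (fun i => C *ᵥ x i) (C *ᵥ c)

variable {G : SimpleGraph (Fin N)} [DecidableRel G.Adj]

theorem SimpleGraph.hasDerivAt_sum_sum_sq_sub_div {k : Fin N → Fin N → ℝ → ℝ}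
    {γ q : Fin N → Fin N → ℝ} {t : ℝ} (hγ : ∀ i j, G.Adj i j → γ i j ≠ 0)
    (hk : ∀ i j, G.Adj i j → HasDerivAt (k i j) (γ i j * q i j) t) (κ : ℝ) :
    HasDerivAt (fun s => ∑ i, ∑ j, if G.Adj i j then (k i j s - κ) ^ 2 / (2 * γ i j) else 0)
      (∑ i, ∑ j, if G.Adj i j then (k i j t - κ) * q i j else 0) t := by
  refine HasDerivAt.fun_sum fun i _ => HasDerivAt.fun_sum fun j _ => ?_
  split_ifs with hij
  · refine ((((hk i j hij).sub_const κ).fun_pow 2).div_const _).congr_deriv ?_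
    field_simp [hγ i j hij]
    ring
  · exact hasDerivAt_const t 0

theorem SimpleGraph.Connected.lyapunov_derivative_le (hG : G.Connected) (hX : Convex ℝ X)
    (hf : ∀ z ∈ X, HasFDerivAt f (J z).mulVecLin.toContinuousLinearMap z) (hP : P.IsSymm)
    (hLMI : ∀ z ∈ X, ∀ v, v ⬝ᵥ (P * J z + (J z)ᵀ * P) *ᵥ v ≤ θ * (C *ᵥ v ⬝ᵥ C *ᵥ v))
    (hPB : P * B = Cᵀ) (hθ : 0 ≤ θ + 1) {κ : ℝ} (hκ : (θ + 1) * N ^ 2 / 2 ≤ κ)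
    {K : Fin N → Fin N → ℝ} (hK : ∀ i j, K i j = K j i) (hKG : ∀ i j, ¬G.Adj i j → K i j = 0)
    {x : Fin N → n → ℝ} (hx : ∀ i, x i ∈ X) :
    2 * ∑ i, (x i - (N : ℝ)⁻¹ • ∑ j, x j) ⬝ᵥ
        P *ᵥ (f (x i) + B *ᵥ ∑ j, K i j • (C *ᵥ x j - C *ᵥ x i)) +
      ∑ i, ∑ j, (if G.Adj i j then
        (K i j - κ) * ((C *ᵥ x i - C *ᵥ x j) ⬝ᵥ (C *ᵥ x i - C *ᵥ x j)) else 0) ≤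
      -∑ i, C *ᵥ (x i - (N : ℝ)⁻¹ • ∑ j, x j) ⬝ᵥ C *ᵥ (x i - (N : ℝ)⁻¹ • ∑ j, x j) := by
  set xbar := (N : ℝ)⁻¹ • ∑ j, x j
  set y : Fin N → p → ℝ := fun i => C *ᵥ (x i - xbar)
  have hN : 0 < N := Fin.pos_iff_nonempty.2 hG.nonempty
  have hdiff (i j) : C *ᵥ x i - C *ᵥ x j = y i - y j := by simp only [y, mulVec_sub]; abel
  have hgain : ∑ i, ∑ j, (if G.Adj i j then
      (K i j - κ) * ((C *ᵥ x i - C *ᵥ x j) ⬝ᵥ (C *ᵥ x i - C *ᵥ x j)) else 0) =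
      ∑ i, ∑ j, K i j * ((C *ᵥ x i - C *ᵥ x j) ⬝ᵥ (C *ᵥ x i - C *ᵥ x j)) -
        κ * G.dirichletEnergy y := by
    simp only [SimpleGraph.dirichletEnergy, mul_sum, ← sum_sub_distrib, hdiff]
    refine sum_congr rfl fun i _ => sum_congr rfl fun j _ => ?_
    split_ifs with hij
    · ring
    · simp [hKG i j hij]
  have hpoincare : ∑ i, y i ⬝ᵥ y i ≤ (N : ℝ) ^ 2 / 2 * G.dirichletEnergy y := by
    simpa using hG.sum_dotProduct_self_le (v := y)
      (by simp only [y, xbar, ← mulVec_sum, sum_sub_inv_smul_sum, mulVec_zero])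
  have hpassive := two_mul_sum_sub_inv_smul_sum_dotProduct_mulVec_le hN hX hf hP hLMI hx
  have hcoupling := two_mul_sum_sub_dotProduct_mulVec_coupling (C := C) hPB hK x xbar
  have hE := G.dirichletEnergy_nonneg y
  simp only [mulVec_add, dotProduct_add, sum_add_distrib, mul_add]
  rw [hgain, hcoupling]
  nlinarith [mul_le_mul_of_nonneg_right hκ hE, mul_le_mul_of_nonneg_left hpoincare hθ]

end Network

theorem integrableOn_Ici_of_hasDerivAt_le_neg {V W : ℝ → ℝ} {a c : ℝ}
    (hV : ∀ t ∈ Set.Ici a, ∃ V', HasDerivAt V V' t ∧ V' ≤ -W t) (hVc : ∀ t ∈ Set.Ici a, c ≤ V t)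
    (hW : ∀ t ∈ Set.Ici a, 0 ≤ W t) (hWc : ContinuousOn W (Set.Ici a)) :
    IntegrableOn W (Set.Ici a) := by
  choose! V' hV' hV'W using hV
  have hWint (T : ℝ) : IntegrableOn W (Set.Icc a T) :=
    (hWc.mono Set.Icc_subset_Ici_self).integrableOn_compact isCompact_Icc
  have hbound (T : ℝ) (hT : a ≤ T) : ∫ s in a..T, W s ≤ V a - c := by
    have hIoo : Set.Ioo a T ⊆ Set.Ici a := Set.Ioo_subset_Ioi_self.trans Set.Ioi_subset_Ici_self
    have := intervalIntegral.integral_le_sub_of_hasDeriv_right_of_le hT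
      (fun s hs => (hV' s hs.1).continuousAt.continuousWithinAt.neg)
      (fun s hs => (hV' s (hIoo hs)).neg.hasDerivWithinAt) (hWint T)
      (fun s hs => le_neg.1 (hV'W s (hIoo hs)))
    rw [Pi.neg_apply, Pi.neg_apply] at this
    linarith [hVc T hT]
  rw [integrableOn_Ici_iff_integrableOn_Ioi]
  refine integrableOn_Ioi_of_intervalIntegral_norm_bounded (V a - c) a
    (fun T => (hWint T).mono_set Set.Ioc_subset_Icc_self) Filter.tendsto_id ?_
  filter_upwards [Filter.eventually_ge_atTop a] with T hT
  refine (intervalIntegral.integral_congr fun s hs => ?_).trans_le (hbound T hT)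
  rw [Set.uIcc_of_le hT] at hs
  exact Real.norm_of_nonneg (hW s hs.1)

theorem synchronization_error_L2_general
    {n p N : ℕ}
    (G : SimpleGraph (Fin N)) (hG : G.Connected)
    (f : (Fin n → ℝ) → (Fin n → ℝ))
    (J : (Fin n → ℝ) → Matrix (Fin n) (Fin n) ℝ)
    (hf : ∀ z, HasFDerivAt f ((J z).mulVecLin.toContinuousLinearMap) z)
    (B : Matrix (Fin n) (Fin p) ℝ) (C : Matrix (Fin p) (Fin n) ℝ)
    -- Assumption (OFP)
    (X : Set (Fin n → ℝ)) (hX : Convex ℝ X)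
    (θ : ℝ) (hθ : 0 < θ)
    (P : Matrix (Fin n) (Fin n) ℝ) (hP : P.PosDef)
    (hLMI : ∀ z ∈ X, ∀ v : Fin n → ℝ,
      v ⬝ᵥ ((P * J z + (J z)ᵀ * P) *ᵥ v) ≤ θ * ((C *ᵥ v) ⬝ᵥ (C *ᵥ v)))
    (hPB : P * B = Cᵀ)
    -- a continuously differentiable solution of the adaptively coupled system on `[0,∞)`
    (x : Fin N → ℝ → (Fin n → ℝ)) (k : Fin N → Fin N → ℝ → ℝ)
    (γ : Fin N → Fin N → ℝ)
    (hγpos : ∀ i j, G.Adj i j → 0 < γ i j)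
    (hksym : ∀ i j t, k i j t = k j i t)
    (hknonadj : ∀ i j, ¬ G.Adj i j → ∀ t, k i j t = 0)
    (hxode : ∀ i, ∀ t, 0 ≤ t →
      HasDerivAt (x i)
        (f (x i t) + B *ᵥ (∑ j, k i j t • (C *ᵥ x j t - C *ᵥ x i t))) t)
    (hkode : ∀ i j, G.Adj i j → ∀ t, 0 ≤ t →
      HasDerivAt (k i j)
        (γ i j * ((C *ᵥ x i t - C *ᵥ x j t) ⬝ᵥ (C *ᵥ x i t - C *ᵥ x j t))) t)
    (hXinv : ∀ i, ∀ t, 0 ≤ t → x i t ∈ X) :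
    -- conclusion: `t ↦ ∑ᵢ |ỹᵢ(t)|²` is integrable on `[0,∞)`
    IntegrableOn
      (fun t => ∑ i, ((C *ᵥ (x i t - (N : ℝ)⁻¹ • ∑ j, x j t)) ⬝ᵥ
        (C *ᵥ (x i t - (N : ℝ)⁻¹ • ∑ j, x j t))))
      (Set.Ici (0 : ℝ)) := by
  classical
  have hPsymm : P.IsSymm := by
    simpa [Matrix.IsHermitian, Matrix.IsSymm] using hP.isHermitian
  set κ := (θ + 1) * N ^ 2 / 2
  refine integrableOn_Ici_of_hasDerivAt_le_neg (c := 0)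
    (V := fun t => ∑ i, (x i t - (N : ℝ)⁻¹ • ∑ j, x j t) ⬝ᵥ P *ᵥ (x i t - (N : ℝ)⁻¹ • ∑ j, x j t) +
      ∑ i, ∑ j, if G.Adj i j then (k i j t - κ) ^ 2 / (2 * γ i j) else 0)
    ?_ (fun t _ => add_nonneg ?_ ?_) (fun t _ => sum_nonneg fun i _ => dotProduct_self_nonneg _) ?_
  · intro t ht
    refine ⟨_, (HasDerivAt.sum_sub_inv_smul_sum_dotProduct_mulVec hPsymm fun i => hxode i t ht).add
      (G.hasDerivAt_sum_sum_sq_sub_div (fun i j hij => (hγpos i j hij).ne')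
        (fun i j hij => hkode i j hij t ht) κ), ?_⟩
    exact hG.lyapunov_derivative_le hX (fun z _ => hf z) hPsymm hLMI hPB (by linarith) le_rfl
      (fun i j => hksym i j t) (fun i j hij => hknonadj i j hij t) fun i => hXinv i t ht
  · exact sum_nonneg fun i _ => hP.posSemidef.dotProduct_mulVec_nonneg _
  · refine sum_nonneg fun i _ => sum_nonneg fun j _ => ?_
    split_ifs with hij
    · have := hγpos i j hij
      positivity
    · exact le_rfl
  · have hxc : ContinuousOn (fun t i => x i t) (Set.Ici 0) :=
      continuousOn_pi.2 fun i t ht => (hxode i t ht).continuousAt.continuousWithinAt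
    refine Continuous.comp_continuousOn (g := fun z : Fin N → Fin n → ℝ =>
      ∑ i, C *ᵥ (z i - (N : ℝ)⁻¹ • ∑ j, z j) ⬝ᵥ C *ᵥ (z i - (N : ℝ)⁻¹ • ∑ j, z j)) ?_ hxc
    fun_prop

/-- Square integrability of the synchronization errors: for the adaptively
coupled system under Assumption (OFP) with states remaining in `X`, one has
`∫₀^∞ ∑ᵢ |ỹᵢ(t)|² dt < ∞`. -/
theorem synchronization_error_L2
    {n p N : ℕ}
    (G : SimpleGraph (Fin N)) (hG : G.Connected)
    (f : (Fin n → ℝ) → (Fin n → ℝ))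
    (J : (Fin n → ℝ) → Matrix (Fin n) (Fin n) ℝ)
    (hf : ∀ z, HasFDerivAt f ((J z).mulVecLin.toContinuousLinearMap) z)
    (hJcont : Continuous J)
    (B : Matrix (Fin n) (Fin p) ℝ) (C : Matrix (Fin p) (Fin n) ℝ)
    -- Assumption (OFP)
    (X : Set (Fin n → ℝ)) (hX : Convex ℝ X)
    (θ : ℝ) (hθ : 0 < θ)
    (P : Matrix (Fin n) (Fin n) ℝ) (hP : P.PosDef)
    (hLMI : ∀ z ∈ X, ∀ v : Fin n → ℝ,
      v ⬝ᵥ ((P * J z + (J z)ᵀ * P) *ᵥ v) ≤ θ * ((C *ᵥ v) ⬝ᵥ (C *ᵥ v)))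
    (hPB : P * B = Cᵀ)
    -- a continuously differentiable solution of the adaptively coupled system on `[0,∞)`
    (x : Fin N → ℝ → (Fin n → ℝ)) (k : Fin N → Fin N → ℝ → ℝ)
    (γ : Fin N → Fin N → ℝ)
    (hγsym : ∀ i j, γ i j = γ j i)
    (hγpos : ∀ i j, G.Adj i j → 0 < γ i j)
    (hksym : ∀ i j t, k i j t = k j i t)
    (hknonadj : ∀ i j, ¬ G.Adj i j → ∀ t, k i j t = 0)
    (hxode : ∀ i, ∀ t, 0 ≤ t →
      HasDerivAt (x i)
        (f (x i t) + B *ᵥ (∑ j, k i j t • (C *ᵥ x j t - C *ᵥ x i t))) t)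
    (hkode : ∀ i j, G.Adj i j → ∀ t, 0 ≤ t →
      HasDerivAt (k i j)
        (γ i j * ((C *ᵥ x i t - C *ᵥ x j t) ⬝ᵥ (C *ᵥ x i t - C *ᵥ x j t))) t)
    (hXinv : ∀ i, ∀ t, 0 ≤ t → x i t ∈ X) :
    -- conclusion: `t ↦ ∑ᵢ |ỹᵢ(t)|²` is integrable on `[0,∞)`
    IntegrableOn
      (fun t => ∑ i, ((C *ᵥ (x i t - (N : ℝ)⁻¹ • ∑ j, x j t)) ⬝ᵥ
        (C *ᵥ (x i t - (N : ℝ)⁻¹ • ∑ j, x j t))))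
      (Set.Ici (0 : ℝ)) :=
  synchronization_error_L2_general G hG f J hf B C X hX θ hθ P hP hLMI hPB x k γ hγpos hksym
    hknonadj hxode hkode hXinv
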